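/- Soundness of the first-order factoring rule: if an interpretation satisfies (the universal closure of) the clause Γ′ ∪ {ℓ₁,…,ℓₙ} and σ is a unifier of {ℓ₁,…,ℓₙ}, then the interpretation satisfies the clause Γ′σ ∪ {ℓ₁σ}. -/

import Mathlib

/-! Instances of a valid clause are valid: under `ρ`, the instance `ℓσ` of a literal means
what `ℓ` means under the assignment `x ↦ ⟦σ x⟧ρ`. Since `σ` unifies `L`, the instance of
`Γ ∪ L` is exactly `Γσ ∪ {ℓ₁σ}`. -/

/-- First-order terms over variables `V` and function symbols `F`.
Constants are nullary functions. -/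
inductive Trm (V F : Type) : Type
  | var : V → Trm V F
  | fn  : F → List (Trm V F) → Trm V F

/-- Substitutions map variables to terms. -/
abbrev Subst (V F : Type) := V → Trm V F

/-- Apply a substitution to a term. -/
def Trm.subst {V F : Type} (σ : Subst V F) : Trm V F → Trm V F
  | .var x => σ x
  | .fn f ts => .fn f (ts.attach.map (fun ⟨t, _⟩ => t.subst σ))

/-- Free variables of a term. -/
def Trm.fv {V F : Type} : Trm V F → Set V
  | .var x => {x}
  | .fn _ ts => ts.attach.foldr (fun ⟨t, _⟩ s => t.fv ∪ s) ∅

/-- Composition of substitutions: apply `σ` first, then `τ`. -/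
def Subst.comp {V F : Type} (σ τ : Subst V F) : Subst V F := fun x => (σ x).subst τ

/-- Atomic formulas. -/
structure Atm (V F P : Type) where
  pred : P
  args : List (Trm V F)

/-- Literals: atoms or negated atoms. -/
inductive Lit (V F P : Type)
  | pos : Atm V F P → Lit V F P
  | neg : Atm V F P → Lit V F P

def Atm.subst {V F P : Type} (σ : Subst V F) (a : Atm V F P) : Atm V F P :=
  ⟨a.pred, a.args.map (Trm.subst σ)⟩

def Lit.subst {V F P : Type} (σ : Subst V F) : Lit V F P → Lit V F P
  | .pos a => .pos (a.subst σ)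
  | .neg a => .neg (a.subst σ)

/-- The complement of a literal. -/
def Lit.compl {V F P : Type} : Lit V F P → Lit V F P
  | .pos a => .neg a
  | .neg a => .pos a

/-- The underlying atom of a literal. -/
def Lit.atom {V F P : Type} : Lit V F P → Atm V F P
  | .pos a => a
  | .neg a => a

/-- Free variables of a literal. -/
def Lit.fv {V F P : Type} (ℓ : Lit V F P) : Set V :=
  ℓ.atom.args.foldr (fun t s => t.fv ∪ s) ∅

/-- Clauses as sets of literals. -/
abbrev Clause (V F P : Type) := Set (Lit V F P)

def Clause.subst {V F P : Type} (σ : Subst V F) (C : Clause V F P) : Clause V F P :=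
  (Lit.subst σ) '' C

/-- Subsumption: `X` subsumes `Y` iff some instance of `X` is included in `Y`. -/
def Subsumes {V F P : Type} (X Y : Clause V F P) : Prop :=
  ∃ σ : Subst V F, Clause.subst σ X ⊆ Y

/-- A first-order interpretation with domain `D`. -/
structure Interp (F P D : Type) where
  fn : F → List D → D
  pr : P → List D → Prop

/-- Evaluation of a term in an interpretation under a variable assignment. -/
def Trm.eval {V F P D : Type} (I : Interp F P D) (ρ : V → D) : Trm V F → D
  | .var x => ρ x
  | .fn f ts => I.fn f (ts.attach.map (fun ⟨t, _⟩ => t.eval I ρ))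

/-- Truth of a literal in an interpretation under a variable assignment. -/
def Lit.eval {V F P D : Type} (I : Interp F P D) (ρ : V → D) : Lit V F P → Prop
  | .pos a => I.pr a.pred (a.args.map (Trm.eval I ρ))
  | .neg a => ¬ I.pr a.pred (a.args.map (Trm.eval I ρ))

/-- An interpretation satisfies (the universal closure of) a clause:
under every variable assignment some literal of the clause is true. -/
def Sat {V F P D : Type} (I : Interp F P D) (C : Clause V F P) : Prop :=
  ∀ ρ : V → D, ∃ ℓ ∈ C, Lit.eval I ρ ℓ

theorem Trm.eval_subst {V F P D : Type} (I : Interp F P D) (ρ : V → D) (σ : Subst V F)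
    (t : Trm V F) : (t.subst σ).eval I ρ = t.eval I (fun x => (σ x).eval I ρ) := by
  cases t with
  | var x => simp only [Trm.subst, Trm.eval]
  | fn f ts =>
    simp only [Trm.subst, Trm.eval, List.attach_map_val, List.map_map]
    exact congrArg (I.fn f) <| List.map_congr_left fun t _ => Trm.eval_subst I ρ σ t
termination_by sizeOf t

theorem Lit.eval_subst {V F P D : Type} (I : Interp F P D) (ρ : V → D) (σ : Subst V F)
    (ℓ : Lit V F P) : (ℓ.subst σ).eval I ρ ↔ ℓ.eval I (fun x => (σ x).eval I ρ) := by
  have hargs (ts : List (Trm V F)) :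
      (ts.map (Trm.subst σ)).map (Trm.eval I ρ) = ts.map (Trm.eval I fun x => (σ x).eval I ρ) := by
    simp only [List.map_map, Function.comp_def, Trm.eval_subst]
  cases ℓ <;> simp only [Lit.subst, Lit.eval, Atm.subst, hargs]

theorem Sat.subst {V F P D : Type} {I : Interp F P D} {C : Set (Lit V F P)} (h : Sat I C)
    (σ : Subst V F) : Sat I (Clause.subst σ C) := fun ρ => by
  obtain ⟨ℓ, hℓC, hℓ⟩ := h fun x => (σ x).eval I ρ
  exact ⟨ℓ.subst σ, Set.mem_image_of_mem _ hℓC, (Lit.eval_subst I ρ σ ℓ).2 hℓ⟩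

theorem Clause.subst_union {V F P : Type} (σ : Subst V F) (C C' : Clause V F P) :
    Clause.subst σ (C ∪ C') = Clause.subst σ C ∪ Clause.subst σ C' :=
  Set.image_union _ _ _

theorem Clause.subst_eq_singleton_of_unifier {V F P : Type} {σ : Subst V F} {L : Clause V F P}
    (hσ : ∀ a ∈ L, ∀ b ∈ L, Lit.subst σ a = Lit.subst σ b) {ℓ : Lit V F P} (hℓ : ℓ ∈ L) :
    Clause.subst σ L = {ℓ.subst σ} := by
  refine Set.eq_singleton_iff_unique_mem.2 ⟨Set.mem_image_of_mem _ hℓ, ?_⟩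
  rintro _ ⟨a, ha, rfl⟩
  exact hσ a ha ℓ hℓ

theorem factoring_sound_general {V F P D : Type} (I : Interp F P D)
    (Γ : Clause V F P) (L : Set (Lit V F P))
    (σ : Subst V F) (hσ : ∀ a ∈ L, ∀ b ∈ L, Lit.subst σ a = Lit.subst σ b)
    (ℓ₁ : Lit V F P) (hℓ₁ : ℓ₁ ∈ L)
    (h : Sat I (Γ ∪ L)) :
    Sat I (Clause.subst σ Γ ∪ {Lit.subst σ ℓ₁}) := by
  rw [← Clause.subst_eq_singleton_of_unifier hσ hℓ₁, ← Clause.subst_union]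
  exact h.subst σ

/-- Soundness of the first-order factoring rule. -/
theorem factoring_sound {V F P D : Type} (I : Interp F P D)
    (Γ : Clause V F P) (L : Set (Lit V F P)) (hne : L.Nonempty)
    (σ : Subst V F) (hσ : ∀ a ∈ L, ∀ b ∈ L, Lit.subst σ a = Lit.subst σ b)
    (ℓ₁ : Lit V F P) (hℓ₁ : ℓ₁ ∈ L)
    (h : Sat I (Γ ∪ L)) :
    Sat I (Clause.subst σ Γ ∪ {Lit.subst σ ℓ₁}) :=
  factoring_sound_general I Γ L σ hσ ℓ₁ hℓ₁ h
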